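/- arXiv:2010.08723 — 2 statements merged into one kernel-verified Lean document; each statement's English description precedes it below -/
import Mathlib

section
/- Let C be a k-rectifiable Radon measure on ℝⁿ of the form ‖C‖ = θ H^k⌊Γ with θ ≥ 1 H^k-a.e. on the k-rectifiable set Γ, and suppose the density ratio ‖C‖(B_ρ(0))/ρ^k is equal to a constant θ₀ for all ρ > 0, and that the monotonicity identity 0 = ‖C‖(B_λ)/λ^k − ‖C‖(B_σ)/σ^k = ∫_{G_k(B_λ∖B_σ)} |P_{S^⊥}(x/|x|)|²/|x|^k dC(x,S) holds for all 0 < σ < λ (where C is regarded as the associated rectifiable varifold). Then for C-almost every (x,S) one has x ∈ S, i.e. C({(x,S) : P_S x ≠ x}) = 0. -/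
/-!
The monotonicity identity says that the nonnegative integrand `|x - P_S x|² / |x|^(k+2)` has zero
`C`-integral over every annulus `B_λ ∖ B_σ`. Countably many annuli exhaust `ℝⁿ ∖ {0}`, so the
integrand vanishes `C`-a.e. off `x = 0`, i.e. `P_S x = x` there; at `x = 0` this holds by linearity.
-/

open MeasureTheory Metric Set
open scoped ENNReal

theorem setLIntegral_iUnion_eq_zero {α ι : Type*} [MeasurableSpace α] [Countable ι]
    {μ : Measure α} {s : ι → Set α} {f : α → ℝ≥0∞} (h : ∀ i, ∫⁻ a in s i, f a ∂μ = 0) :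
    ∫⁻ a in ⋃ i, s i, f a ∂μ = 0 :=
  nonpos_iff_eq_zero.1 <| (lintegral_iUnion_le s f).trans_eq <| by simp [h]

theorem iUnion_closedBall_diff_closedBall_inv {E : Type*} [NormedAddCommGroup E] :
    ⋃ m : ℕ, closedBall (0 : E) (m + 2) \ closedBall 0 (m + 2)⁻¹ = {0}ᶜ := by
  ext x
  simp only [mem_iUnion, Set.mem_sdiff, mem_closedBall, dist_zero_right, not_le, mem_compl_iff,
    mem_singleton_iff, ← norm_pos_iff]
  constructor
  · rintro ⟨m, -, hm⟩
    exact (inv_pos.2 (by positivity)).trans hm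
  · intro hx
    obtain ⟨m, hm⟩ := exists_nat_ge (max ‖x‖ ‖x‖⁻¹)
    refine ⟨m, by linarith [le_max_left ‖x‖ ‖x‖⁻¹], inv_lt_of_inv_lt₀ hx ?_⟩
    linarith [le_max_right ‖x‖ ‖x‖⁻¹]

theorem inv_nat_add_two_lt (m : ℕ) : ((m : ℝ) + 2)⁻¹ < m + 2 := by
  have : (1 : ℝ) < m + 2 := by linarith [m.cast_nonneg (α := ℝ)]
  exact (inv_lt_one_of_one_lt₀ this).trans this

theorem eq_of_ofReal_norm_sub_sq_div_eq_zero {E : Type*} [NormedAddCommGroup E] {x y : E}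
    {r : ℝ} (hx : x ≠ 0) (h : ENNReal.ofReal (‖x - y‖ ^ 2 / ‖x‖ ^ r) = 0) : y = x := by
  have hpos : 0 < ‖x‖ ^ r := Real.rpow_pos_of_pos (norm_pos_iff.2 hx) r
  rw [ENNReal.ofReal_eq_zero, div_le_iff₀ hpos, zero_mul] at h
  have hsq : ‖x - y‖ ^ 2 = 0 := le_antisymm h (by positivity)
  rw [pow_eq_zero_iff two_ne_zero, norm_eq_zero, sub_eq_zero] at hsq
  exact hsq.symm

theorem stmt7_general {n k : ℕ}
    (C : Measure ((EuclideanSpace ℝ (Fin n)) ×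
      ((EuclideanSpace ℝ (Fin n)) →L[ℝ] (EuclideanSpace ℝ (Fin n)))))
    (hmono : ∀ σ lam : ℝ, 0 < σ → σ < lam →
      (∫⁻ p in {p : (EuclideanSpace ℝ (Fin n)) ×
            ((EuclideanSpace ℝ (Fin n)) →L[ℝ] (EuclideanSpace ℝ (Fin n))) |
            p.1 ∈ closedBall (0 : EuclideanSpace ℝ (Fin n)) lam \ closedBall 0 σ},
        ENNReal.ofReal (‖p.1 - p.2 p.1‖ ^ 2 / ‖p.1‖ ^ ((k : ℝ) + 2)) ∂C) = 0) :
    C {p | p.2 p.1 ≠ p.1} = 0 := by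
  have hzero : ∫⁻ p in Prod.fst ⁻¹' {0}ᶜ,
      ENNReal.ofReal (‖p.1 - p.2 p.1‖ ^ 2 / ‖p.1‖ ^ ((k : ℝ) + 2)) ∂C = 0 := by
    rw [← iUnion_closedBall_diff_closedBall_inv, preimage_iUnion]
    exact setLIntegral_iUnion_eq_zero fun m =>
      hmono _ _ (inv_pos.2 (by positivity)) (inv_nat_add_two_lt m)
  rw [setLIntegral_eq_zero_iff (measurable_fst (measurableSet_singleton 0).compl)
    (by fun_prop)] at hzero
  refine measure_eq_zero_iff_ae_notMem.2 (hzero.mono fun p hp hne => hne ?_)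
  by_cases hx : p.1 = 0
  · simp [hx]
  · exact eq_of_ofReal_norm_sub_sq_div_eq_zero hx (hp hx)

/-- For a rectifiable `k`-varifold `C` (here a Radon measure on `ℝⁿ × (ℝⁿ →L ℝⁿ)` where the
second component records the orthogonal projection onto the `k`-plane `S`) whose mass
`‖C‖ = θ H^k ⌊ Γ` has `θ ≥ 1` a.e., whose density ratios at `0` are constant, and which
satisfies the exact monotonicity identity (the cone integrand vanishes on every annulus),
the planes charged by `C` contain the radial direction: `C({(x,S) : P_S x ≠ x}) = 0`. -/
theorem stmt7 {n k : ℕ}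
    (C : Measure ((EuclideanSpace ℝ (Fin n)) ×
      ((EuclideanSpace ℝ (Fin n)) →L[ℝ] (EuclideanSpace ℝ (Fin n)))))
    [IsLocallyFiniteMeasure C]
    (Γ : Set (EuclideanSpace ℝ (Fin n))) (θ : EuclideanSpace ℝ (Fin n) → ℝ≥0∞)
    (hθ : ∀ᵐ x ∂((μH[(k : ℝ)]).restrict Γ), 1 ≤ θ x)
    (hmass : Measure.map Prod.fst C = ((μH[(k : ℝ)]).restrict Γ).withDensity θ)
    (θ₀ : ℝ≥0∞)
    (hconst : ∀ ρ : ℝ, 0 < ρ →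
      (Measure.map Prod.fst C) (closedBall (0 : EuclideanSpace ℝ (Fin n)) ρ)
        / ENNReal.ofReal (ρ ^ (k : ℝ)) = θ₀)
    (hmono : ∀ σ lam : ℝ, 0 < σ → σ < lam →
      (∫⁻ p in {p : (EuclideanSpace ℝ (Fin n)) ×
            ((EuclideanSpace ℝ (Fin n)) →L[ℝ] (EuclideanSpace ℝ (Fin n))) |
            p.1 ∈ closedBall (0 : EuclideanSpace ℝ (Fin n)) lam \ closedBall 0 σ},
        ENNReal.ofReal (‖p.1 - p.2 p.1‖ ^ 2 / ‖p.1‖ ^ ((k : ℝ) + 2)) ∂C) = 0) :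
    C {p | p.2 p.1 ≠ p.1} = 0 :=
  stmt7_general C hmono
end

section
/- Let μ_j be a sequence of positive Radon measures on ℝⁿ converging weakly* to μ, let x_j → x₀, and suppose for each j there is an increasing function φ_j with μ_j(B_r(x_j))/r^k ≤ μ_j(B_t(x_j))/t^k + φ_j(t) for 0 < r < t, and φ_j → 0 uniformly on a neighborhood of 0 as j → ∞ in the sense that sup_j φ_j(t) → 0 as t → 0. If additionally the densities Θ^k(μ_j, x_j) exist, then limsup_{j→∞} Θ^k(μ_j, x_j) ≤ Θ^k(μ, x₀) whenever Θ^k(μ, x₀) exists: the k-density is upper semicontinuous along such sequences. -/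
/-!
Fix `0 < t < s`. A continuous cutoff that is `1` on a slightly larger ball than `B_t(x₀)` and
vanishes off `B_s(x₀)` dominates the indicator of `B_t(x_j)` once `x_j` is close to `x₀`, so weak*
convergence gives `limsup_j μ_j(B_t(x_j)) ≤ μ(B_s(x₀))`. Approximate monotonicity bounds
`Θ^k(μ_j, x_j)` by `μ_j(B_t(x_j)) / t^k + ε` uniformly in `j` for small `t`; letting `t ↑ s` and
then `s ↓ 0` leaves `limsup_j Θ^k(μ_j, x_j) ≤ Θ^k(μ, x₀) + ε`.
-/

open MeasureTheory Metric Filter Set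
open scoped ENNReal Topology

section Cutoff

variable {X : Type*} [MeasurableSpace X] {μ : Measure X} {f : X → ℝ}

theorem measure_le_ofReal_integral_of_eqOn_one {s : Set X} (hs : MeasurableSet s)
    (hfi : Integrable f μ) (hf0 : 0 ≤ f) (hf1 : EqOn f 1 s) :
    μ s ≤ ENNReal.ofReal (∫ y, f y ∂μ) := by
  rw [ofReal_integral_eq_lintegral_ofReal hfi (ae_of_all _ hf0), ← lintegral_indicator_one hs]
  refine lintegral_mono fun y => ?_
  by_cases hy : y ∈ s <;> simp [hy, hf1 _]

theorem ofReal_integral_le_measure_of_eqOn_zero {u : Set X} (hu : MeasurableSet u)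
    (hf01 : ∀ y, f y ∈ Icc (0 : ℝ) 1) (hf0 : EqOn f 0 uᶜ) :
    ENNReal.ofReal (∫ y, f y ∂μ) ≤ μ u := by
  calc ENNReal.ofReal (∫ y, f y ∂μ)
      ≤ ‖∫ y, f y ∂μ‖ₑ := by
        rw [Real.enorm_eq_ofReal_abs]; exact ENNReal.ofReal_le_ofReal (le_abs_self _)
    _ ≤ ∫⁻ y, ‖f y‖ₑ ∂μ := enorm_integral_le_lintegral_enorm f
    _ ≤ ∫⁻ y, u.indicator 1 y ∂μ := lintegral_mono fun y => by
        by_cases hy : y ∈ u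
        · simpa [hy, Real.enorm_eq_ofReal_abs, abs_of_nonneg (hf01 y).1] using (hf01 y).2
        · simp [hy, hf0 (mem_compl hy)]
    _ = μ u := lintegral_indicator_one hu

end Cutoff

theorem ENNReal.limsup_div_const_add {ι : Type*} {l : Filter ι} [l.NeBot] (a : ι → ℝ≥0∞) {c : ℝ≥0∞}
    (hc : c ≠ 0) (e : ℝ≥0∞) : limsup (fun j => a j / c + e) l = limsup a l / c + e :=
  (Monotone.map_limsup_of_continuousAt (f := fun b => b / c + e)
    (fun _ _ hab => by dsimp only; gcongr) a
    ((ENNReal.continuous_div_const c hc).add continuous_const).continuousAt).symm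

theorem le_div_ofReal_pow_add_of_forall_lt {L m e : ℝ≥0∞} {k : ℕ} {s : ℝ} (hs : 0 < s)
    (h : ∀ t, 0 < t → t < s → L ≤ m / ENNReal.ofReal (t ^ k) + e) :
    L ≤ m / ENNReal.ofReal (s ^ k) + e := by
  have hpow : Tendsto (fun t : ℝ => ENNReal.ofReal (t ^ k)) (𝓝[<] s) (𝓝 (ENNReal.ofReal (s ^ k))) :=
    ENNReal.tendsto_ofReal (((continuous_pow k).tendsto s).mono_left nhdsWithin_le_nhds)
  exact ge_of_tendsto ((ENNReal.Tendsto.const_div hpow (.inl ENNReal.ofReal_ne_top)).add_const e)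
    (eventually_of_mem (Ioo_mem_nhdsLT hs) fun t ht => h t ht.1 ht.2)

theorem limsup_measure_closedBall_le_measure_ball {X ι : Type*} [MetricSpace X] [ProperSpace X]
    [MeasurableSpace X] [OpensMeasurableSpace X] {l : Filter ι} [l.NeBot]
    {μs : ι → Measure X} {μ : Measure X} [∀ j, IsLocallyFiniteMeasure (μs j)]
    (hweak : ∀ f : X → ℝ, Continuous f → HasCompactSupport f →
      Tendsto (fun j => ∫ y, f y ∂(μs j)) l (𝓝 (∫ y, f y ∂μ)))
    {x : ι → X} {x₀ : X} (hx : Tendsto x l (𝓝 x₀)) {t s : ℝ} (hts : t < s) :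
    limsup (fun j => μs j (closedBall (x j) t)) l ≤ μ (ball x₀ s) := by
  obtain ⟨η, hη, hηs⟩ : ∃ η, 0 < η ∧ t + η < s := ⟨(s - t) / 2, by linarith, by linarith⟩
  obtain ⟨f, hf1, hf0, hfc, hf01⟩ :=
    exists_continuous_one_zero_of_isCompact (isCompact_closedBall x₀ (t + η))
      isOpen_ball.isClosed_compl
      (disjoint_compl_right_iff_subset.2 (closedBall_subset_ball hηs))
  have hle : ∀ᶠ j in l, μs j (closedBall (x j) t) ≤ ENNReal.ofReal (∫ y, f y ∂(μs j)) := by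
    filter_upwards [hx (ball_mem_nhds x₀ hη)] with j hj
    refine measure_le_ofReal_integral_of_eqOn_one measurableSet_closedBall
      (f.continuous.integrable_of_hasCompactSupport hfc) (fun y => (hf01 y).1) (hf1.mono ?_)
    exact closedBall_subset_closedBall' (by linarith [mem_ball.1 hj])
  calc limsup (fun j => μs j (closedBall (x j) t)) l
      ≤ limsup (fun j => ENNReal.ofReal (∫ y, f y ∂(μs j))) l := limsup_le_limsup hle
    _ = ENNReal.ofReal (∫ y, f y ∂μ) :=
      (ENNReal.tendsto_ofReal (hweak f f.continuous hfc)).limsup_eq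
    _ ≤ μ (ball x₀ s) :=
      ofReal_integral_le_measure_of_eqOn_zero measurableSet_ball hf01 hf0

theorem stmt13_general {n k : ℕ}
    (μseq : ℕ → Measure (EuclideanSpace ℝ (Fin n))) (μ : Measure (EuclideanSpace ℝ (Fin n)))
    [∀ j, IsLocallyFiniteMeasure (μseq j)]
    (hweak : ∀ f : EuclideanSpace ℝ (Fin n) → ℝ, Continuous f → HasCompactSupport f →
      Tendsto (fun j => ∫ y, f y ∂(μseq j)) atTop (𝓝 (∫ y, f y ∂μ)))
    (x : ℕ → EuclideanSpace ℝ (Fin n)) (x₀ : EuclideanSpace ℝ (Fin n))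
    (hx : Tendsto x atTop (𝓝 x₀))
    (φ : ℕ → ℝ → ℝ)
    (hφunif : ∀ ε : ℝ, 0 < ε → ∃ δ > 0, ∀ j, ∀ t : ℝ, 0 < t → t < δ → φ j t ≤ ε)
    (hmonoid : ∀ j, ∀ r t : ℝ, 0 < r → r < t →
      μseq j (closedBall (x j) r) / ENNReal.ofReal (r ^ k)
        ≤ μseq j (closedBall (x j) t) / ENNReal.ofReal (t ^ k) + ENNReal.ofReal (φ j t))
    (θ : ℕ → ℝ≥0∞) (θ₀ : ℝ≥0∞)
    (hθ : ∀ j, Tendsto (fun r : ℝ => μseq j (closedBall (x j) r) / ENNReal.ofReal (r ^ k))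
      (𝓝[>] (0 : ℝ)) (𝓝 (θ j)))
    (hθ₀ : Tendsto (fun r : ℝ => μ (closedBall x₀ r) / ENNReal.ofReal (r ^ k))
      (𝓝[>] (0 : ℝ)) (𝓝 θ₀)) :
    Filter.limsup θ atTop ≤ θ₀ := by
  refine ENNReal.le_of_forall_pos_le_add fun ε hε _ => ?_
  obtain ⟨δ, hδ, hφε⟩ := hφunif ε hε
  have hθj : ∀ j t, 0 < t → t < δ →
      θ j ≤ μseq j (closedBall (x j) t) / ENNReal.ofReal (t ^ k) + ε := fun j t ht htδ =>
    le_of_tendsto (hθ j) <| eventually_of_mem (Ioo_mem_nhdsGT ht) fun r hr =>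
      (hmonoid j r t hr.1 hr.2).trans <| by
        grw [hφε j t ht htδ, ENNReal.ofReal_coe_nnreal]
  have hlimsup : ∀ t s, 0 < t → t < s → s < δ →
      limsup θ atTop ≤ μ (closedBall x₀ s) / ENNReal.ofReal (t ^ k) + ε := by
    intro t s ht hts hsδ
    have hc : ENNReal.ofReal (t ^ k) ≠ 0 := (ENNReal.ofReal_pos.2 (by positivity)).ne'
    calc limsup θ atTop
        ≤ limsup (fun j => μseq j (closedBall (x j) t) / ENNReal.ofReal (t ^ k) + ε) atTop :=
          limsup_le_limsup (.of_forall fun j => hθj j t ht (hts.trans hsδ))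
      _ = limsup (fun j => μseq j (closedBall (x j) t)) atTop / ENNReal.ofReal (t ^ k) + ε :=
          ENNReal.limsup_div_const_add _ hc _
      _ ≤ μ (ball x₀ s) / ENNReal.ofReal (t ^ k) + ε := by
          gcongr; exact limsup_measure_closedBall_le_measure_ball hweak hx hts
      _ ≤ μ (closedBall x₀ s) / ENNReal.ofReal (t ^ k) + ε := by
          gcongr; exact ball_subset_closedBall
  exact ge_of_tendsto (hθ₀.add_const _) <| eventually_of_mem (Ioo_mem_nhdsGT hδ) fun s hs =>
    le_div_ofReal_pow_add_of_forall_lt hs.1 fun t ht hts => hlimsup t s ht hts hs.2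

/-- Upper semicontinuity of the `k`-density along a weakly* converging sequence of
measures with uniformly approximately monotone density ratios. -/
theorem stmt13 {n k : ℕ}
    (μseq : ℕ → Measure (EuclideanSpace ℝ (Fin n))) (μ : Measure (EuclideanSpace ℝ (Fin n)))
    [∀ j, IsLocallyFiniteMeasure (μseq j)] [IsLocallyFiniteMeasure μ]
    (hweak : ∀ f : EuclideanSpace ℝ (Fin n) → ℝ, Continuous f → HasCompactSupport f →
      Tendsto (fun j => ∫ y, f y ∂(μseq j)) atTop (𝓝 (∫ y, f y ∂μ)))
    (x : ℕ → EuclideanSpace ℝ (Fin n)) (x₀ : EuclideanSpace ℝ (Fin n))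
    (hx : Tendsto x atTop (𝓝 x₀))
    (φ : ℕ → ℝ → ℝ)
    (hφmono : ∀ j, Monotone (φ j)) (hφnn : ∀ j t, 0 ≤ φ j t)
    (hφunif : ∀ ε : ℝ, 0 < ε → ∃ δ > 0, ∀ j, ∀ t : ℝ, 0 < t → t < δ → φ j t ≤ ε)
    (hmonoid : ∀ j, ∀ r t : ℝ, 0 < r → r < t →
      μseq j (closedBall (x j) r) / ENNReal.ofReal (r ^ k)
        ≤ μseq j (closedBall (x j) t) / ENNReal.ofReal (t ^ k) + ENNReal.ofReal (φ j t))
    (θ : ℕ → ℝ≥0∞) (θ₀ : ℝ≥0∞)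
    (hθ : ∀ j, Tendsto (fun r : ℝ => μseq j (closedBall (x j) r) / ENNReal.ofReal (r ^ k))
      (𝓝[>] (0 : ℝ)) (𝓝 (θ j)))
    (hθ₀ : Tendsto (fun r : ℝ => μ (closedBall x₀ r) / ENNReal.ofReal (r ^ k))
      (𝓝[>] (0 : ℝ)) (𝓝 θ₀)) :
    Filter.limsup θ atTop ≤ θ₀ :=
  stmt13_general μseq μ hweak x x₀ hx φ hφunif hmonoid θ θ₀ hθ hθ₀
end
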